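/- Let n : ℕ and let R be a finite list of words in n generators, and let G be the finitely presented group PresentedGroup S, where S ⊆ FreeGroup (Fin n) is the set of elements determined by R. Let X be a finite list of words such that the subgroup H = Subgroup.closure of the set of elements of G represented by the words in X has finite index in G. Then membership in H is decidable: the predicate on words w asserting that the element of G represented by w lies in H satisfies ComputablePred. -/

import Mathlib

/-- The set of relators in the free group determined by a list of words. -/
def relsOf {α : Type} (R : List (List (α × Bool))) : Set (FreeGroup α) :=
  {x | ∃ r ∈ R, x = FreeGroup.mk r}

/-- The element of the presented group represented by a word. -/
def wordElt {α : Type} (R : List (List (α × Bool))) (w : List (α × Bool)) :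
    PresentedGroup (relsOf R) :=
  PresentedGroup.mk (relsOf R) (FreeGroup.mk w)

/-!
The preimage of `H` in the free group is generated by the words of `X` together with all
conjugates of the relators, so membership in `H` is recursively enumerable: search for a product
of these generators that freely reduces to the same word. Because `H` has finite index,
non-membership is recursively enumerable as well: `g ∉ H` iff `t⁻¹ g ∈ H` for one of finitely
many fixed representatives `t` of the nontrivial cosets. Post's theorem then makes membership
decidable.
-/

namespace REPred

variable {α β : Type*} [Primcodable α] [Primcodable β]

theorem comp {p : β → Prop} (hp : REPred p) {f : α → β} (hf : Computable f) :
    REPred fun a => p (f a) :=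
  Partrec.comp hp hf

theorem or {p q : α → Prop} (hp : REPred p) (hq : REPred q) : REPred fun a => p a ∨ q a := by
  obtain ⟨k, hk, H⟩ := Partrec.merge' hp hq
  exact hk.dom_re.of_eq fun a => (H a).2.trans (by simp [Part.assert])

theorem exists_mem_list {ι : Type*} {p : ι → α → Prop} (L : List ι)
    (hp : ∀ i ∈ L, REPred (p i)) : REPred fun a => ∃ i ∈ L, p i a := by
  induction L with
  | nil => exact Partrec.none.of_eq fun a => (Part.assert_neg (by simp)).symm
  | cons i L ih =>
    exact ((hp i List.mem_cons_self).or (ih fun j hj => hp j (List.mem_cons_of_mem _ hj))).of_eq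
      fun a => by simp

end REPred

theorem Computable₂.rePred_exists {α β : Type*} [Primcodable α] [Primcodable β]
    {f : α → β → Bool} (hf : Computable₂ f) : REPred fun a => ∃ b, f a b = true := by
  have hsearch : Computable₂ fun (a : α) (k : ℕ) =>
      ((Encodable.decode k : Option β).casesOn false (f a) : Bool) :=
    Computable.option_casesOn (Computable.decode.comp Computable.snd)
      (Computable.const false) (hf.comp (Computable.fst.comp Computable.fst) Computable.snd).to₂
  refine (Partrec.rfind hsearch.partrec₂).dom_re.of_eq fun a => ?_
  rw [Nat.rfind_dom]
  constructor
  · rintro ⟨k, hk, -⟩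
    simp only [PFun.coe_val, Part.mem_some_iff] at hk
    cases hd : (Encodable.decode k : Option β) with
    | none => simp [hd] at hk
    | some b => exact ⟨b, by simpa [hd] using hk.symm⟩
  · rintro ⟨b, hb⟩
    exact ⟨Encodable.encode b, by simpa [Encodable.encodek] using hb.symm, fun _ => trivial⟩

theorem Subgroup.exists_finset_notMem_iff {G : Type*} [Group G] (H : Subgroup G)
    [H.FiniteIndex] : ∃ s : Finset G, ∀ g, g ∉ H ↔ ∃ t ∈ s, t⁻¹ * g ∈ H := by
  classical
  have := H.fintypeQuotientOfFiniteIndex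
  refine ⟨(Finset.univ.filter fun c : G ⧸ H => c ≠ ((1 : G) : G ⧸ H)).image Quotient.out,
    fun g => ?_⟩
  simp only [Finset.mem_image, Finset.mem_filter, Finset.mem_univ, true_and]
  have hcoset : ∀ x : G, (x : G ⧸ H) = ((1 : G) : G ⧸ H) ↔ x ∈ H := fun x => by
    rw [eq_comm, QuotientGroup.eq, inv_one, one_mul]
  constructor
  · intro hg
    refine ⟨(g : G ⧸ H).out, ⟨(g : G ⧸ H), fun h => hg ((hcoset g).1 h), rfl⟩, ?_⟩
    exact QuotientGroup.eq.1 (QuotientGroup.out_eq' _)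
  · rintro ⟨_, ⟨c, hc, rfl⟩, ht⟩ hg
    refine hc ?_
    rw [← QuotientGroup.out_eq' c, QuotientGroup.eq.2 ht]
    exact (hcoset g).2 hg

theorem PresentedGroup.comap_mk_closure_image {α : Type*} (rels S : Set (FreeGroup α)) :
    (Subgroup.closure (mk rels '' S)).comap (mk rels) =
      Subgroup.closure (S ∪ Group.conjugatesOfSet rels) := by
  rw [← MonoidHom.map_closure, Subgroup.comap_map_eq, Subgroup.closure_union]
  exact congrArg (Subgroup.closure S ⊔ ·) (QuotientGroup.ker_mk' _)

namespace FreeGroup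

section Words

variable {α γ : Type*}

def substWord (g : γ → List (α × Bool)) (u : List (γ × Bool)) : List (α × Bool) :=
  u.flatMap fun x => cond x.2 (g x.1) (invRev (g x.1))

theorem mk_substWord (g : γ → List (α × Bool)) (u : List (γ × Bool)) :
    mk (substWord g u) = lift (fun c => mk (g c)) (mk u) := by
  rw [lift_mk]
  induction u with
  | nil => rfl
  | cons x u ih =>
    rw [substWord, List.flatMap_cons, ← mul_mk, ← substWord, ih, List.map_cons, List.prod_cons]
    cases x.2 <;> simp [inv_mk]

theorem mk_mem_closure_range_iff (g : γ → List (α × Bool)) (w : List (α × Bool)) :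
    mk w ∈ Subgroup.closure (Set.range fun c => mk (g c)) ↔
      ∃ u, mk (substWord g u) = mk w := by
  rw [← range_lift_eq_closure, MonoidHom.mem_range]
  constructor
  · rintro ⟨y, hy⟩
    obtain ⟨u, rfl⟩ := Quot.exists_rep y
    exact ⟨u, (mk_substWord g u).trans hy⟩
  · rintro ⟨u, hu⟩
    exact ⟨mk u, by rw [← mk_substWord, hu]⟩

theorem reduce_eq_foldr [DecidableEq α] (L : List (α × Bool)) :
    reduce L = L.foldr (fun x ih => List.casesOn ih [x] fun hd tl =>
      if x.1 = hd.1 ∧ x.2 = !hd.2 then tl else x :: hd :: tl) [] := by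
  induction L with
  | nil => rfl
  | cons x L ih => rw [List.foldr_cons, ← ih]; rfl

end Words

section Computability

variable {α γ : Type*} [Primcodable α] [Primcodable γ]

theorem primrec_invRev : Primrec (invRev : List (α × Bool) → List (α × Bool)) :=
  Primrec.list_reverse.comp <| Primrec.list_map Primrec.id <|
    Primrec.pair (Primrec.fst.comp Primrec.snd) (Primrec.not.comp (Primrec.snd.comp Primrec.snd))

theorem primrec_substWord {g : γ → List (α × Bool)} (hg : Primrec g) :
    Primrec (substWord g) :=
  Primrec.list_flatMap Primrec.id <| Primrec.cond (Primrec.snd.comp Primrec.snd)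
    (hg.comp (Primrec.fst.comp Primrec.snd))
    (primrec_invRev.comp (hg.comp (Primrec.fst.comp Primrec.snd)))

theorem primrec_reduce [DecidableEq α] :
    Primrec (reduce : List (α × Bool) → List (α × Bool)) := by
  have hstep : Primrec fun p : (α × Bool) × List (α × Bool) =>
      List.casesOn (motive := fun _ => List (α × Bool)) p.2 [p.1] fun hd tl =>
        if p.1.1 = hd.1 ∧ p.1.2 = !hd.2 then tl else p.1 :: hd :: tl := by
    have hx : Primrec
        fun q : ((α × Bool) × List (α × Bool)) × (α × Bool) × List (α × Bool) => q.1.1 :=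
      Primrec.fst.comp Primrec.fst
    have hhd : Primrec
        fun q : ((α × Bool) × List (α × Bool)) × (α × Bool) × List (α × Bool) => q.2.1 :=
      Primrec.fst.comp Primrec.snd
    refine Primrec.list_casesOn (h := fun p q =>
        if p.1.1 = q.1.1 ∧ p.1.2 = !q.1.2 then q.2 else p.1 :: q.1 :: q.2) Primrec.snd
      (Primrec.list_cons.comp Primrec.fst (Primrec.const ([] : List (α × Bool)))) ?_
    refine Primrec.ite (PrimrecPred.and ?_ ?_) (Primrec.snd.comp Primrec.snd) ?_
    · exact Primrec.eq.comp (Primrec.fst.comp hx) (Primrec.fst.comp hhd)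
    · exact Primrec.eq.comp (Primrec.snd.comp hx) (Primrec.not.comp (Primrec.snd.comp hhd))
    · exact Primrec.list_cons.comp hx (Primrec.list_cons.comp hhd (Primrec.snd.comp Primrec.snd))
  exact (Primrec.list_foldr Primrec.id (Primrec.const []) (hstep.comp Primrec.snd).to₂).of_eq
    fun L => (reduce_eq_foldr L).symm

theorem rePred_mk_mem_closure_range [DecidableEq α] {g : γ → List (α × Bool)}
    (hg : Primrec g) : REPred fun w => mk w ∈ Subgroup.closure (Set.range fun c => mk (g c)) := by
  refine (Computable₂.rePred_exists (f := fun w u => decide (reduce (substWord g u) = reduce w))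
    ?_).of_eq fun w => ?_
  · exact (Primrec.eq.comp (primrec_reduce.comp ((primrec_substWord hg).comp Primrec.snd))
      (primrec_reduce.comp Primrec.fst)).decide.to_comp
  · simp only [decide_eq_true_eq, mk_mem_closure_range_iff]
    exact exists_congr fun u => ⟨reduce.exact, reduce.sound⟩

theorem computablePred_mk_mem_of_finiteIndex (K : Subgroup (FreeGroup α)) [K.FiniteIndex]
    (hK : REPred fun w => mk w ∈ K) : ComputablePred fun w : List (α × Bool) => mk w ∈ K := by
  classical
  obtain ⟨s, hs⟩ := K.exists_finset_notMem_iff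
  refine ComputablePred.computable_iff_re_compl_re'.2 ⟨hK, ?_⟩
  refine (REPred.exists_mem_list s.toList fun t _ =>
    hK.comp (Primrec.list_append.comp (Primrec.const (invRev t.toWord)) Primrec.id).to_comp).of_eq
    fun w => ?_
  simp [hs, ← inv_mk, ← mul_mk, mk_toWord]

end Computability

end FreeGroup

section WordProblem

open FreeGroup

variable {α : Type} (X R : List (List (α × Bool)))

def preimageGen : Fin X.length ⊕ List (α × Bool) × Fin R.length → List (α × Bool)
  | .inl i => X[i]
  | .inr (c, j) => c ++ R[j] ++ invRev c

theorem range_mk_preimageGen :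
    Set.range (fun c => mk (preimageGen X R c)) =
      {x | ∃ u ∈ X, x = mk u} ∪ Group.conjugatesOfSet (relsOf R) := by
  classical
  ext x
  constructor
  · rintro ⟨i | ⟨c, j⟩, rfl⟩
    · exact Or.inl ⟨X[i], List.getElem_mem _, rfl⟩
    · refine Or.inr <| Group.mem_conjugatesOfSet_iff.2
        ⟨_, ⟨R[j], List.getElem_mem _, rfl⟩, isConj_iff.2 ⟨mk c, ?_⟩⟩
      simp [preimageGen, mul_mk, inv_mk]
  · rintro (⟨u, hu, rfl⟩ | hx)
    · obtain ⟨i, hi, rfl⟩ := List.getElem_of_mem hu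
      exact ⟨.inl ⟨i, hi⟩, rfl⟩
    · obtain ⟨_, ⟨r, hr, rfl⟩, hconj⟩ := Group.mem_conjugatesOfSet_iff.1 hx
      obtain ⟨c, rfl⟩ := isConj_iff.1 hconj
      obtain ⟨j, hj, rfl⟩ := List.getElem_of_mem hr
      exact ⟨.inr (c.toWord, ⟨j, hj⟩), by
        simp [preimageGen, ← mul_mk, ← inv_mk, mk_toWord, mul_assoc]⟩

theorem primrec_preimageGen [Primcodable α] : Primrec (preimageGen X R) :=
  Primrec.sumCasesOn Primrec.id
    ((Primrec.dom_finite fun i : Fin X.length => X[i]).comp Primrec.snd).to₂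
    (Primrec.list_append.comp (Primrec.list_append.comp (Primrec.fst.comp Primrec.snd)
      ((Primrec.dom_finite fun j : Fin R.length => R[j]).comp (Primrec.snd.comp Primrec.snd)))
      (primrec_invRev.comp (Primrec.fst.comp Primrec.snd))).to₂ |>.of_eq fun c => by
    rcases c with i | ⟨c, j⟩ <;> rfl

theorem comap_closure_wordElt :
    (Subgroup.closure {x | ∃ u ∈ X, x = wordElt R u}).comap (PresentedGroup.mk (relsOf R)) =
      Subgroup.closure (Set.range fun c => mk (preimageGen X R c)) := by
  rw [range_mk_preimageGen, ← PresentedGroup.comap_mk_closure_image]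
  congr 2
  ext x
  simp [wordElt, eq_comm]

end WordProblem

/-- Membership in a finite-index subgroup, given by a finite generating set of words,
is decidable. -/
theorem membership_finite_index_decidable (n : ℕ) (R : List (List (Fin n × Bool)))
    (X : List (List (Fin n × Bool)))
    (hfi : (Subgroup.closure {x | ∃ u ∈ X, x = wordElt R u}).FiniteIndex) :
    ComputablePred fun w : List (Fin n × Bool) =>
      wordElt R w ∈ Subgroup.closure {x | ∃ u ∈ X, x = wordElt R u} := by
  set H := Subgroup.closure {x | ∃ u ∈ X, x = wordElt R u}
  have : (H.comap (PresentedGroup.mk (relsOf R))).FiniteIndex := ⟨by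
    rw [H.index_comap_of_surjective (PresentedGroup.mk_surjective _)]
    exact hfi.index_ne_zero⟩
  have hre : REPred fun w => FreeGroup.mk w ∈ H.comap (PresentedGroup.mk (relsOf R)) := by
    rw [comap_closure_wordElt]
    exact FreeGroup.rePred_mk_mem_closure_range (primrec_preimageGen X R)
  exact FreeGroup.computablePred_mk_mem_of_finiteIndex _ hre
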